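/- Let n ≥ 1, p > 1, let f : ℝ^n → ℝ be a C² function and let x₀ ∈ ℝ^n be a point with ∇f(x₀) ≠ 0. Define the vector fields F(y) = ‖∇f(y)‖^{p-2} ∇f(y) and G(y) = ‖∇(e^{-f})(y)‖^{p-2} ∇(e^{-f})(y), which are differentiable in a neighborhood of x₀. Then their divergences at x₀ satisfy div G (x₀) = -(e^{-f(x₀)})^{p-1} · ( div F (x₀) - (p-1) ‖∇f(x₀)‖^p ), where div H (x) = Σ_{i=1}^n ⟨ D H(x)(e_i), e_i ⟩ denotes the divergence computed from the Fréchet derivative D H(x) using the standard orthonormal basis (e_i) of ℝ^n. -/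

import Mathlib

/-!
Since `∇e^{-f} = -e^{-f} ∇f`, the flux `|∇e^{-f}|^{p-2} ∇e^{-f}` is the flux `F` of `f` multiplied
by the scalar `c = -e^{-(p-1)f}`. The product rule `div (c F) = c div F + ⟨∇c, F⟩` then gives the
identity, the last term being `(p-1) e^{-(p-1)f} ⟨∇f, |∇f|^{p-2} ∇f⟩ = (p-1) e^{-(p-1)f} |∇f|^p`.
-/

open Real RealInnerProductSpace

/-- The divergence of a vector field on `ℝ^n`, computed from the Fréchet derivative
using the standard orthonormal basis. -/
noncomputable def ediv {n : ℕ} (H : EuclideanSpace ℝ (Fin n) → EuclideanSpace ℝ (Fin n))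
    (x : EuclideanSpace ℝ (Fin n)) : ℝ :=
  ∑ i : Fin n, ⟪fderiv ℝ H x (EuclideanSpace.single i 1), EuclideanSpace.single i 1⟫

theorem rpow_norm_smul_smul {E : Type*} [SeminormedAddCommGroup E] [NormedSpace ℝ E]
    (q a : ℝ) (v : E) : ‖a • v‖ ^ q • (a • v) = (|a| ^ q * a) • (‖v‖ ^ q • v) := by
  rw [norm_smul, Real.norm_eq_abs, Real.mul_rpow (abs_nonneg a) (norm_nonneg v), smul_smul,
    smul_smul, mul_right_comm]

theorem DifferentiableAt.rpow_norm_smul {E V : Type*} [NormedAddCommGroup E] [NormedSpace ℝ E]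
    [NormedAddCommGroup V] [InnerProductSpace ℝ V] {g : E → V} {x : E}
    (hg : DifferentiableAt ℝ g x) (hx : g x ≠ 0) (q : ℝ) :
    DifferentiableAt ℝ (fun y => ‖g y‖ ^ q • g y) x :=
  ((hg.norm ℝ hx).rpow_const (Or.inl (norm_ne_zero_iff.2 hx))).smul hg

section InnerProductSpace

variable {E : Type*} [NormedAddCommGroup E] [InnerProductSpace ℝ E]

theorem inner_rpow_norm_smul_self {v : E} (hv : v ≠ 0) (p : ℝ) :
    ⟪v, ‖v‖ ^ (p - 2) • v⟫ = ‖v‖ ^ p := by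
  rw [real_inner_smul_right, real_inner_self_eq_norm_sq, ← Real.rpow_natCast,
    ← Real.rpow_add (norm_pos_iff.2 hv)]
  norm_num

variable [CompleteSpace E]

theorem ContDiff.gradient {f : E → ℝ} {m n : WithTop ℕ∞} (hf : ContDiff ℝ n f) (hmn : m + 1 ≤ n) :
    ContDiff ℝ m (gradient f) :=
  (InnerProductSpace.toDual ℝ E).symm.contDiff.comp (hf.fderiv_right hmn)

theorem gradient_exp_neg {f : E → ℝ} {x : E} (hf : DifferentiableAt ℝ f x) :
    gradient (fun z => exp (-f z)) x = (-exp (-f x)) • gradient f x := by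
  rw [gradient, (hf.hasFDerivAt.fun_neg.exp).fderiv, smul_neg, ← neg_smul, map_smul]
  rfl

end InnerProductSpace

theorem ediv_smul {n : ℕ} {c : EuclideanSpace ℝ (Fin n) → ℝ}
    {H : EuclideanSpace ℝ (Fin n) → EuclideanSpace ℝ (Fin n)} {x : EuclideanSpace ℝ (Fin n)}
    (hc : DifferentiableAt ℝ c x) (hH : DifferentiableAt ℝ H x) :
    ediv (fun y => c y • H y) x = c x * ediv H x + fderiv ℝ c x (H x) := by
  have hexpand :
      ∑ i : Fin n, ⟪H x, EuclideanSpace.single i 1⟫ • EuclideanSpace.single i 1 = H x := by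
    simpa [real_inner_comm] using (EuclideanSpace.basisFun (Fin n) ℝ).sum_repr' (H x)
  conv_rhs => rw [← hexpand]
  simp only [ediv, fderiv_fun_smul hc hH, add_apply, smul_apply,
    ContinuousLinearMap.smulRight_apply, inner_add_left, real_inner_smul_left, map_sum, map_smul,
    smul_eq_mul, Finset.mul_sum, ← Finset.sum_add_distrib]
  congr 1; funext i; ring

theorem pLaplacian_exp_neg_general {n : ℕ} (p : ℝ)
    (f : EuclideanSpace ℝ (Fin n) → ℝ) (hf : ContDiff ℝ 2 f)
    (x₀ : EuclideanSpace ℝ (Fin n)) (hx₀ : gradient f x₀ ≠ 0)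
    (F G : EuclideanSpace ℝ (Fin n) → EuclideanSpace ℝ (Fin n))
    (hF : F = fun y => ‖gradient f y‖ ^ (p - 2) • gradient f y)
    (hG : G = fun y => ‖gradient (fun z => Real.exp (-f z)) y‖ ^ (p - 2) •
      gradient (fun z => Real.exp (-f z)) y) :
    (∀ᶠ y in nhds x₀, DifferentiableAt ℝ F y ∧ DifferentiableAt ℝ G y) ∧
      ediv G x₀ = -(Real.exp (-f x₀)) ^ (p - 1) *
        (ediv F x₀ - (p - 1) * ‖gradient f x₀‖ ^ p) := by
  have hfd : Differentiable ℝ f := hf.differentiable (by norm_num)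
  have hgrad : ContDiff ℝ 1 (gradient f) := hf.gradient (by norm_num)
  set c : EuclideanSpace ℝ (Fin n) → ℝ := fun y => -exp (-f y * (p - 1))
  have hGF : G = fun y => c y • F y := by
    subst hF hG
    funext y
    rw [gradient_exp_neg (hfd y), rpow_norm_smul_smul, abs_neg, abs_of_pos (exp_pos _),
      ← exp_mul, mul_neg, ← exp_add, show -f y * (p - 2) + -f y = -f y * (p - 1) by ring]
  have hc : ∀ y, HasFDerivAt c (-(exp (-f y * (p - 1)) • (p - 1) • -fderiv ℝ f y)) y :=
    fun y => ((hfd y).hasFDerivAt.fun_neg.mul_const (p - 1)).exp.fun_neg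
  have hFd : ∀ y, gradient f y ≠ 0 → DifferentiableAt ℝ F y := fun y hy =>
    hF ▸ (hgrad.differentiable one_ne_zero y).rpow_norm_smul hy (p - 2)
  refine ⟨?_, ?_⟩
  · filter_upwards [hgrad.continuous.continuousAt.eventually_ne hx₀] with y hy
    exact ⟨hFd y hy, hGF ▸ (hc y).differentiableAt.smul (hFd y hy)⟩
  · rw [hGF, ediv_smul (hc x₀).differentiableAt (hFd x₀ hx₀), (hc x₀).fderiv]
    have hflux : fderiv ℝ f x₀ (F x₀) = ‖gradient f x₀‖ ^ p := by
      rw [← inner_gradient_left, hF, inner_rpow_norm_smul_self hx₀]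
    simp only [c, neg_apply, smul_apply, smul_eq_mul, hflux, exp_mul]
    ring

/-- The pointwise identity `-Δ_p(e^{-f}) = (e^{-f})^{p-1} [Δ_p f - (p-1)|∇f|^p]`
at a point where `∇f ≠ 0`, for a `C²` function `f`. -/
theorem pLaplacian_exp_neg {n : ℕ} (hn : 1 ≤ n) (p : ℝ) (hp : 1 < p)
    (f : EuclideanSpace ℝ (Fin n) → ℝ) (hf : ContDiff ℝ 2 f)
    (x₀ : EuclideanSpace ℝ (Fin n)) (hx₀ : gradient f x₀ ≠ 0)
    (F G : EuclideanSpace ℝ (Fin n) → EuclideanSpace ℝ (Fin n))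
    (hF : F = fun y => ‖gradient f y‖ ^ (p - 2) • gradient f y)
    (hG : G = fun y => ‖gradient (fun z => Real.exp (-f z)) y‖ ^ (p - 2) •
      gradient (fun z => Real.exp (-f z)) y) :
    (∀ᶠ y in nhds x₀, DifferentiableAt ℝ F y ∧ DifferentiableAt ℝ G y) ∧
      ediv G x₀ = -(Real.exp (-f x₀)) ^ (p - 1) *
        (ediv F x₀ - (p - 1) * ‖gradient f x₀‖ ^ p) :=
  pLaplacian_exp_neg_general p f hf x₀ hx₀ F G hF hG
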